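/- arXiv:1007.3211 — 3 statements merged into one kernel-verified Lean document; each statement's English description precedes it below -/
import Mathlib

section
/- Let H be a complex Hilbert space and let P : H →L[ℂ] H be an orthogonal projection (a self-adjoint idempotent bounded operator). If A and B are bounded operators on H with A and B positive, 1 − A and 1 − B positive (i.e., A and B are effects), and P = (1/2) • (A + B), then A = P and B = P. (Hence projections are extreme points of the set of effects, which yields that projection valued measures are pure, i.e., extremal, POVMs.) -/
/-!
In the C⋆-algebra of bounded operators with the Loewner order, let `a + b = 2p` with
`0 ≤ a, b ≤ 1` and `q = 1 - p`. Then `a ≤ 2p`, so `0 ≤ q a q ≤ 2 q p q = 0`; writing `a = c⋆c`,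
the C⋆-identity turns `q a q = (c q)⋆(c q) = 0` into `c q = 0`, hence `a q = 0`.
The same argument applied to `1 - a ≤ 2q` gives `(1 - a) p = 0`, and then `a = a p + a q = p`.
-/

section CStarAlgebra

variable {A : Type*} [NonUnitalCStarAlgebra A] [PartialOrder A] [StarOrderedRing A]

theorem mul_eq_zero_of_star_mul_mul_eq_zero {a s : A} (ha : 0 ≤ a) (h : star s * a * s = 0) :
    a * s = 0 := by
  obtain ⟨b, rfl⟩ := CStarAlgebra.nonneg_iff_eq_star_mul_self.mp ha
  have hbs : b * s = 0 := by
    rw [← CStarRing.star_mul_self_eq_zero_iff, star_mul, ← h]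
    simp only [mul_assoc]
  rw [mul_assoc, hbs, mul_zero]

theorem mul_eq_zero_of_le_of_star_mul_mul_eq_zero {a c s : A} (ha : 0 ≤ a) (hac : a ≤ c)
    (hc : star s * c * s = 0) : a * s = 0 :=
  mul_eq_zero_of_star_mul_mul_eq_zero ha <| le_antisymm
    (hc ▸ star_left_conjugate_le_conjugate hac s) (star_left_conjugate_nonneg ha s)

end CStarAlgebra

section Unital

variable {A : Type*} [CStarAlgebra A] [PartialOrder A] [StarOrderedRing A] {p a b : A}

theorem IsStarProjection.mul_one_sub_eq_zero_of_le (hp : IsStarProjection p) (ha : 0 ≤ a)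
    (hap : a ≤ p + p) : a * (1 - p) = 0 :=
  mul_eq_zero_of_le_of_star_mul_mul_eq_zero ha hap <| by
    rw [hp.one_sub.isSelfAdjoint.star_eq, mul_add, hp.one_sub_mul_self, add_zero, zero_mul]

theorem IsStarProjection.eq_of_add_eq_add (hp : IsStarProjection p) (ha₀ : 0 ≤ a) (ha₁ : a ≤ 1)
    (hb₀ : 0 ≤ b) (hb₁ : b ≤ 1) (h : a + b = p + p) : a = p := by
  have ha_q : a * (1 - p) = 0 :=
    hp.mul_one_sub_eq_zero_of_le ha₀ (h ▸ le_add_of_nonneg_right hb₀)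
  have hq_le : 1 - a ≤ (1 - p) + (1 - p) := calc
    1 - a ≤ (1 - a) + (1 - b) := le_add_of_nonneg_right (sub_nonneg.mpr hb₁)
    _ = (1 - p) + (1 - p) := by rw [sub_add_sub_comm, h, sub_add_sub_comm]
  have ha_p : (1 - a) * p = 0 := by
    simpa only [sub_sub_cancel] using
      hp.one_sub.mul_one_sub_eq_zero_of_le (sub_nonneg.mpr ha₁) hq_le
  rw [sub_mul, one_mul, sub_eq_zero] at ha_p
  calc a = a * p + a * (1 - p) := by rw [← mul_add, add_sub_cancel, mul_one]
    _ = p := by rw [ha_q, add_zero, ← ha_p]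

end Unital

/-- An orthogonal projection (self-adjoint idempotent bounded operator) on a complex Hilbert
space is an extreme point of the set of effects: if `P = (1/2) • (A + B)` for effects `A`, `B`
(positive operators with `1 - A`, `1 - B` positive), then `A = P` and `B = P`. -/
theorem projection_extreme_in_effects
    {H : Type*} [NormedAddCommGroup H] [InnerProductSpace ℂ H] [CompleteSpace H]
    (P A B : H →L[ℂ] H)
    (hPsa : IsSelfAdjoint P) (hPidem : IsIdempotentElem P)
    (hA : A.IsPositive) (hA' : ((1 : H →L[ℂ] H) - A).IsPositive)
    (hB : B.IsPositive) (hB' : ((1 : H →L[ℂ] H) - B).IsPositive)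
    (hP : P = (1 / 2 : ℂ) • (A + B)) :
    A = P ∧ B = P := by
  have hproj : IsStarProjection P := ⟨hPidem, hPsa⟩
  have hsum : A + B = P + P := by
    rw [hP, ← two_smul ℂ, smul_smul]
    norm_num
  rw [← ContinuousLinearMap.nonneg_iff_isPositive] at hA hB
  rw [← ContinuousLinearMap.le_def] at hA' hB'
  exact ⟨hproj.eq_of_add_eq_add hA hA' hB hB' hsum,
    hproj.eq_of_add_eq_add hB hB' hA hA' (add_comm B A ▸ hsum)⟩
end

section
/- Let H and H' be separable complex Hilbert spaces with Hilbert bases (e_s)_{s∈ℕ} of H and (e'_n)_{n∈ℕ} of H', and let (A_k)_{k∈ℕ} be a family of bounded linear operators A_k : H' →L[ℂ] H such that Σ_k ‖A_k x‖² = ‖x‖² for every x ∈ H' (a Kraus family summing to the identity). For n, s ∈ ℕ define the sequence v_n^s := (k ↦ ⟨e_s, A_k e'_n⟩). Then: (i) each v_n^s lies in ℓ²(ℕ, ℂ); (ii) for all n, m the family ((s,k) ↦ conj(⟨e_s, A_k e'_n⟩) · ⟨e_s, A_k e'_m⟩) indexed by ℕ × ℕ is summable; and (iii) Σ_s ⟨v_n^s,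 v_m^s⟩_{ℓ²} = δ_{nm} (equal to 1 if n = m and 0 otherwise). -/
/-!
Parseval in `H` and the Kraus relation combine, for nonnegative terms, into
`Σ_{(s,k)} |⟪e_s, A_k x⟫|² = ‖x‖²`: the scalar maps `x ↦ ⟪e_s, A_k x⟫` are themselves a Kraus
family into `ℂ`. Polarization turns this into `Σ_{(s,k)} conj ⟪e_s, A_k x⟫ ⟪e_s, A_k y⟫ = ⟪x, y⟫`
as an unconditional sum over `ℕ × ℕ`, which at `x = e'_n`, `y = e'_m` gives summability and,
after splitting the sum, the orthonormality relation.
-/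

open scoped InnerProductSpace ComplexConjugate

theorem hasSum_prod_of_nonneg {β γ : Type*} {f : β × γ → ℝ} {g : γ → ℝ} {a : ℝ} (hf : 0 ≤ f)
    (hfib : ∀ c, HasSum (fun b => f (b, c)) (g c)) (hg : HasSum g a) : HasSum f a := by
  rw [← (Equiv.prodComm γ β).hasSum_iff]
  have hs : Summable (f ∘ Equiv.prodComm γ β) :=
    (summable_prod_of_nonneg (f := f ∘ Equiv.prodComm γ β) fun _ => hf _).2
      ⟨fun c => (hfib c).summable, hg.summable.congr fun c => ((hfib c).tsum_eq).symm⟩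
  convert hs.hasSum
  exact ((hs.hasSum.prod_fiberwise hfib).unique hg).symm

section

variable {ι 𝕜 E F : Type*} [RCLike 𝕜]
  [NormedAddCommGroup E] [InnerProductSpace 𝕜 E] [NormedAddCommGroup F] [InnerProductSpace 𝕜 F]

theorem hasSum_inner_of_hasSum_norm_sq (T : ι → E →ₗ[𝕜] F)
    (hT : ∀ x, HasSum (fun i => ‖T i x‖ ^ 2) (‖x‖ ^ 2)) (x y : E) :
    HasSum (fun i => ⟪T i x, T i y⟫_𝕜) ⟪x, y⟫_𝕜 := by
  have hT' : ∀ z, HasSum (fun i => (‖T i z‖ : 𝕜) ^ 2) ((‖z‖ : 𝕜) ^ 2) := fun z => by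
    exact_mod_cast (RCLike.hasSum_ofReal 𝕜).mpr (hT z)
  rw [inner_eq_sum_norm_sq_div_four x y]
  convert (((hT' (x + y)).sub (hT' (x - y))).add
    (((hT' (x - RCLike.I • y)).sub (hT' (x + RCLike.I • y))).mul_right RCLike.I)).div_const 4
    using 2 with i
  rw [inner_eq_sum_norm_sq_div_four]
  simp only [map_add, map_sub, map_smul]

theorem HilbertBasis.hasSum_norm_inner_sq (b : HilbertBasis ι 𝕜 E) (x : E) :
    HasSum (fun i => ‖⟪b i, x⟫_𝕜‖ ^ 2) (‖x‖ ^ 2) := by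
  simpa [b.repr_apply_apply] using lp.hasSum_norm (by norm_num) (b.repr x)

theorem HilbertBasis.hasSum_prod_norm_inner_sq {κ : Type*} (b : HilbertBasis ι 𝕜 F)
    (A : κ → E →ₗ[𝕜] F) (hA : ∀ x, HasSum (fun k => ‖A k x‖ ^ 2) (‖x‖ ^ 2)) (x : E) :
    HasSum (fun p : ι × κ => ‖⟪b p.1, A p.2 x⟫_𝕜‖ ^ 2) (‖x‖ ^ 2) :=
  hasSum_prod_of_nonneg (fun _ => by positivity) (fun k => b.hasSum_norm_inner_sq (A k x)) (hA x)

end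

theorem kraus_columns_orthonormal_general
    {H H' : Type*}
    [NormedAddCommGroup H] [InnerProductSpace ℂ H]
    [NormedAddCommGroup H'] [InnerProductSpace ℂ H']
    (e : HilbertBasis ℕ ℂ H) (e' : HilbertBasis ℕ ℂ H')
    (A : ℕ → H' →L[ℂ] H)
    (hKraus : ∀ x : H', HasSum (fun k : ℕ => ‖A k x‖ ^ 2) (‖x‖ ^ 2)) :
    (∀ n s : ℕ, Memℓp (fun k : ℕ => (inner ℂ (e s) (A k (e' n)) : ℂ)) 2) ∧
    (∀ n m : ℕ, Summable (fun p : ℕ × ℕ =>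
      (starRingEnd ℂ) (inner ℂ (e p.1) (A p.2 (e' n)) : ℂ) * (inner ℂ (e p.1) (A p.2 (e' m)) : ℂ))) ∧
    (∀ n m : ℕ, (∑' s : ℕ, ∑' k : ℕ,
        (starRingEnd ℂ) (inner ℂ (e s) (A k (e' n)) : ℂ) * (inner ℂ (e s) (A k (e' m)) : ℂ))
      = if n = m then 1 else 0) := by
  have hcoeff := e.hasSum_prod_norm_inner_sq (fun k => (A k : H' →ₗ[ℂ] H)) hKraus
  have hprod : ∀ n m : ℕ, HasSum (fun p : ℕ × ℕ =>
      conj ⟪e p.1, A p.2 (e' n)⟫_ℂ * ⟪e p.1, A p.2 (e' m)⟫_ℂ) (if n = m then 1 else 0) := by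
    intro n m
    rw [← orthonormal_iff_ite.mp e'.orthonormal n m]
    simpa only [LinearMap.comp_apply, innerₛₗ_apply_apply, ContinuousLinearMap.coe_coe,
      RCLike.inner_apply'] using hasSum_inner_of_hasSum_norm_sq
      (fun p : ℕ × ℕ => (innerₛₗ ℂ (e p.1)).comp (A p.2 : H' →ₗ[ℂ] H)) hcoeff (e' n) (e' m)
  refine ⟨fun n s => memℓp_gen ?_, fun n m => (hprod n m).summable, fun n m => ?_⟩
  · simpa using (hcoeff (e' n)).summable.prod_factor s
  · rw [← (hprod n m).summable.tsum_prod, (hprod n m).tsum_eq]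

/-- For a Kraus family `(A_k)` with `Σ_k ‖A_k x‖² = ‖x‖²` and Hilbert bases `(e_s)`, `(e'_n)`,
the columns `v_n^s = (k ↦ ⟨e_s, A_k e'_n⟩)` are in `ℓ²`, the doubly-indexed families of
products are summable, and `Σ_s ⟨v_n^s, v_m^s⟩ = δ_{nm}`. -/
theorem kraus_columns_orthonormal
    {H H' : Type*}
    [NormedAddCommGroup H] [InnerProductSpace ℂ H] [CompleteSpace H]
    [NormedAddCommGroup H'] [InnerProductSpace ℂ H'] [CompleteSpace H']
    (e : HilbertBasis ℕ ℂ H) (e' : HilbertBasis ℕ ℂ H')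
    (A : ℕ → H' →L[ℂ] H)
    (hKraus : ∀ x : H', HasSum (fun k : ℕ => ‖A k x‖ ^ 2) (‖x‖ ^ 2)) :
    (∀ n s : ℕ, Memℓp (fun k : ℕ => (inner ℂ (e s) (A k (e' n)) : ℂ)) 2) ∧
    (∀ n m : ℕ, Summable (fun p : ℕ × ℕ =>
      (starRingEnd ℂ) (inner ℂ (e p.1) (A p.2 (e' n)) : ℂ) * (inner ℂ (e p.1) (A p.2 (e' m)) : ℂ))) ∧
    (∀ n m : ℕ, (∑' s : ℕ, ∑' k : ℕ,
        (starRingEnd ℂ) (inner ℂ (e s) (A k (e' n)) : ℂ) * (inner ℂ (e s) (A k (e' m)) : ℂ))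
      = if n = m then 1 else 0) :=
  kraus_columns_orthonormal_general e e' A hKraus
end

section
/- Let H and H' be separable complex Hilbert spaces with Hilbert bases (e_s)_{s∈ℕ} of H and (e'_n)_{n∈ℕ} of H'. Let v : ℕ → ℕ → ℓ²(ℕ, ℂ) (written (n,s) ↦ v_n^s) be such that for all n, m ∈ ℕ the family ((s,k) ↦ conj(v_n^s k) · (v_m^s k)) indexed by ℕ × ℕ is summable with sum δ_{nm}. Then there exists a family of bounded linear operators A_k : H' →L[ℂ] H, k ∈ ℕ, such that ⟨e_s, A_k e'_n⟩ = v_n^s k for all s, n, k, and Σ_k ‖A_k x‖² = ‖x‖² for every x ∈ H'. -/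
/-!
Reading `(s, k) ↦ v_n^s k` as a vector `w_n ∈ ℓ²(ℕ × ℕ)`, the hypothesis says exactly that the
`w_n` are orthonormal, so `e'_n ↦ w_n` extends to an isometry `W : H' → ℓ²(ℕ × ℕ)`. Take `A_k` to be
`W` followed by restriction to the fibre `ℕ × {k}` and the identification `ℓ²(ℕ) ≃ H` given by `e`.
The fibres partition `ℕ × ℕ`, so `Σ_k ‖A_k x‖² = ‖W x‖² = ‖x‖²`.
-/

open scoped ComplexConjugate

noncomputable section

section Memℓp

variable {ι : Type*} {E : ι → Type*} [∀ i, NormedAddCommGroup (E i)]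

theorem lp.hasSum_norm_sq (f : lp E 2) : HasSum (fun i => ‖f i‖ ^ 2) (‖f‖ ^ 2) := by
  simpa using lp.hasSum_norm (p := 2) (by norm_num) f

theorem memℓp_two_of_summable_sq {f : ∀ i, E i} (hf : Summable fun i => ‖f i‖ ^ 2) :
    Memℓp f 2 :=
  memℓp_gen (by simpa using hf)

theorem memℓp_two_of_hasSum_conj_mul {𝕜 : Type*} [RCLike 𝕜] {u : ι → 𝕜} {a : 𝕜}
    (h : HasSum (fun p => conj (u p) * u p) a) : Memℓp u 2 := by
  simp only [RCLike.conj_mul] at h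
  exact memℓp_two_of_summable_sq ((RCLike.summable_ofReal 𝕜).1 (by exact_mod_cast h.summable))

end Memℓp

namespace lp

section Fiber

variable {𝕜 E ι κ : Type*} [NormedField 𝕜] [NormedAddCommGroup E] [NormedSpace 𝕜 E]

variable (𝕜) in
def fiberₗ (k : κ) : lp (fun _ : ι × κ => E) 2 →ₗ[𝕜] lp (fun _ : ι => E) 2 where
  toFun f := ⟨fun i => f (i, k), memℓp_two_of_summable_sq <|
    (hasSum_norm_sq f).summable.comp_injective (Prod.mk_left_injective k)⟩
  map_add' _ _ := rfl
  map_smul' _ _ := rfl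

theorem hasSum_norm_sq_fiberₗ (f : lp (fun _ : ι × κ => E) 2) :
    HasSum (fun k => ‖fiberₗ 𝕜 k f‖ ^ 2) (‖f‖ ^ 2) :=
  ((Equiv.prodComm κ ι).hasSum_iff.2 (hasSum_norm_sq f)).prod_fiberwise
    fun k => hasSum_norm_sq (fiberₗ 𝕜 k f)

theorem norm_fiberₗ_le (k : κ) (f : lp (fun _ : ι × κ => E) 2) : ‖fiberₗ 𝕜 k f‖ ≤ ‖f‖ :=
  (pow_le_pow_iff_left₀ (norm_nonneg _) (norm_nonneg _) two_ne_zero).1 <|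
    le_hasSum (hasSum_norm_sq_fiberₗ f) k fun _ _ => by positivity

variable (𝕜) in
def fiber (k : κ) : lp (fun _ : ι × κ => E) 2 →L[𝕜] lp (fun _ : ι => E) 2 :=
  (fiberₗ 𝕜 k).mkContinuous 1 fun f => by simpa using norm_fiberₗ_le k f

@[simp]
theorem fiber_apply (k : κ) (f : lp (fun _ : ι × κ => E) 2) (i : ι) :
    fiber 𝕜 k f i = f (i, k) :=
  rfl

theorem hasSum_norm_sq_fiber (f : lp (fun _ : ι × κ => E) 2) :
    HasSum (fun k => ‖fiber 𝕜 k f‖ ^ 2) (‖f‖ ^ 2) :=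
  hasSum_norm_sq_fiberₗ f

end Fiber

section Orthonormal

variable {𝕜 ι κ : Type*} [RCLike 𝕜]

theorem orthonormal_of_hasSum_conj_mul [DecidableEq ι] {w : ι → lp (fun _ : κ => 𝕜) 2}
    (h : ∀ n m, HasSum (fun p => conj (w n p) * w m p) (if n = m then 1 else 0)) :
    Orthonormal 𝕜 w :=
  orthonormal_iff_ite.2 fun n m => (lp.hasSum_inner (w n) (w m)).unique <| by
    simpa only [RCLike.inner_apply, mul_comm] using h n m

end Orthonormal

end lp

section Kraus

variable {𝕜 ι ι' κ H H' : Type*} [RCLike 𝕜]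
  [NormedAddCommGroup H] [InnerProductSpace 𝕜 H] [NormedAddCommGroup H'] [InnerProductSpace 𝕜 H']

def krausOfColumns (e : HilbertBasis ι 𝕜 H) (e' : HilbertBasis ι' 𝕜 H')
    {w : ι' → lp (fun _ : ι × κ => 𝕜) 2} (hw : Orthonormal 𝕜 w) (k : κ) : H' →L[𝕜] H :=
  (e.repr.symm.toContinuousLinearEquiv : lp (fun _ : ι => 𝕜) 2 →L[𝕜] H) ∘L lp.fiber 𝕜 k ∘L
    hw.orthogonalFamily.linearIsometry.toContinuousLinearMap ∘L
      (e'.repr.toContinuousLinearEquiv : H' →L[𝕜] lp (fun _ : ι' => 𝕜) 2)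

variable (e : HilbertBasis ι 𝕜 H) (e' : HilbertBasis ι' 𝕜 H')
  {w : ι' → lp (fun _ : ι × κ => 𝕜) 2} (hw : Orthonormal 𝕜 w)

theorem inner_krausOfColumns_apply (s : ι) (n : ι') (k : κ) :
    inner 𝕜 (e s) (krausOfColumns e e' hw k (e' n)) = w n (s, k) := by
  classical
  simp [krausOfColumns, ← e.repr_apply_apply, e'.repr_self, LinearIsometry.toSpanSingleton_apply]

theorem hasSum_norm_sq_krausOfColumns_apply (x : H') :
    HasSum (fun k => ‖krausOfColumns e e' hw k x‖ ^ 2) (‖x‖ ^ 2) := by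
  simpa [krausOfColumns] using
    lp.hasSum_norm_sq_fiber (𝕜 := 𝕜) (hw.orthogonalFamily.linearIsometry (e'.repr x))

end Kraus

theorem exists_kraus_family_of_columns_general
    {H H' : Type*}
    [NormedAddCommGroup H] [InnerProductSpace ℂ H]
    [NormedAddCommGroup H'] [InnerProductSpace ℂ H']
    (e : HilbertBasis ℕ ℂ H) (e' : HilbertBasis ℕ ℂ H')
    (v : ℕ → ℕ → lp (fun _ : ℕ => ℂ) 2)
    (hv : ∀ n m : ℕ, HasSum
      (fun p : ℕ × ℕ => (starRingEnd ℂ) (v n p.1 p.2) * v m p.1 p.2)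
      (if n = m then 1 else 0)) :
    ∃ A : ℕ → H' →L[ℂ] H,
      (∀ s n k : ℕ, (inner ℂ (e s) (A k (e' n)) : ℂ) = v n s k) ∧
      (∀ x : H', HasSum (fun k : ℕ => ‖A k x‖ ^ 2) (‖x‖ ^ 2)) := by
  let w : ℕ → lp (fun _ : ℕ × ℕ => ℂ) 2 := fun n =>
    ⟨fun p => v n p.1 p.2, memℓp_two_of_hasSum_conj_mul (hv n n)⟩
  have hw : Orthonormal ℂ w := lp.orthonormal_of_hasSum_conj_mul hv
  exact ⟨krausOfColumns e e' hw, inner_krausOfColumns_apply e e' hw,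
    hasSum_norm_sq_krausOfColumns_apply e e' hw⟩

/-- Converse Kraus construction: from vectors `v_n^s ∈ ℓ²(ℕ, ℂ)` satisfying the orthonormality
relation `Σ_{s,k} conj(v_n^s k) (v_m^s k) = δ_{nm}`, one builds bounded operators
`A_k : H' →L[ℂ] H` with matrix elements `⟨e_s, A_k e'_n⟩ = v_n^s k` and
`Σ_k ‖A_k x‖² = ‖x‖²` for all `x`. -/
theorem exists_kraus_family_of_columns
    {H H' : Type*}
    [NormedAddCommGroup H] [InnerProductSpace ℂ H] [CompleteSpace H]
    [NormedAddCommGroup H'] [InnerProductSpace ℂ H'] [CompleteSpace H']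
    (e : HilbertBasis ℕ ℂ H) (e' : HilbertBasis ℕ ℂ H')
    (v : ℕ → ℕ → lp (fun _ : ℕ => ℂ) 2)
    (hv : ∀ n m : ℕ, HasSum
      (fun p : ℕ × ℕ => (starRingEnd ℂ) (v n p.1 p.2) * v m p.1 p.2)
      (if n = m then 1 else 0)) :
    ∃ A : ℕ → H' →L[ℂ] H,
      (∀ s n k : ℕ, (inner ℂ (e s) (A k (e' n)) : ℂ) = v n s k) ∧
      (∀ x : H', HasSum (fun k : ℕ => ‖A k x‖ ^ 2) (‖x‖ ^ 2)) :=
  exists_kraus_family_of_columns_general e e' v hv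

end
end
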